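/- arXiv:1810.13198 — 2 statements merged into one kernel-verified Lean document; each statement's English description precedes it below -/
import Mathlib

section
/- Let f be the exponential generating function of the Catalan numbers. Then all its Hankel–Wronskian determinants equal 1 at the origin: w_n(0) = 1 for every n ≥ 0. -/
open scoped Nat

/-- The Hankel–Wronskian determinants `w_n(t)` associated with a function `f`:
for `n = 2k ≥ 0` it is the determinant of the (k+1)×(k+1) matrix with (i,j) entry
`f^(i+j)(t)`; for `n = 2k+1 ≥ 0` the (i,j) entry is `f^(i+j+1)(t)`;
and `w_{-3} = 0`, `w_{-2} = w_{-1} = 1`. -/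
noncomputable def hankelWronskian (f : ℝ → ℝ) (n : ℤ) (t : ℝ) : ℝ :=
  if n = -3 then 0
  else if n < 0 then 1
  else if n.toNat % 2 = 0 then
    Matrix.det (Matrix.of fun i j : Fin (n.toNat / 2 + 1) =>
      iteratedDeriv (i.val + j.val) f t)
  else
    Matrix.det (Matrix.of fun i j : Fin (n.toNat / 2 + 1) =>
      iteratedDeriv (i.val + j.val + 1) f t)

/-- `u_n = w_{n-3}·w_n / (w_{n-2}·w_{n-1})`. -/
noncomputable def uChain (f : ℝ → ℝ) (n : ℕ) (t : ℝ) : ℝ :=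
  hankelWronskian f ((n : ℤ) - 3) t * hankelWronskian f (n : ℤ) t /
    (hankelWronskian f ((n : ℤ) - 2) t * hankelWronskian f ((n : ℤ) - 1) t)

/-- `v_n = w_{n-3}·w_{n-1} / w_{n-2}²`. -/
noncomputable def vChain (f : ℝ → ℝ) (n : ℕ) (t : ℝ) : ℝ :=
  hankelWronskian f ((n : ℤ) - 3) t * hankelWronskian f ((n : ℤ) - 1) t /
    (hankelWronskian f ((n : ℤ) - 2) t) ^ 2

/-- The exponential generating function of the Catalan numbers. -/
noncomputable def catalanEGF (t : ℝ) : ℝ := ∑' n : ℕ, (catalan n : ℝ) * t ^ n / n !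

/-!
The Taylor coefficients of `catalanEGF` at `0` are the Catalan numbers, so `w_{2k}(0)` and
`w_{2k+1}(0)` are the Hankel determinants `det (c_{i+j})` and `det (c_{i+j+1})`. Both matrices
factor as `L Lᵀ` with `L` lower unitriangular: `L i k = C(2i+s, i-k) - C(2i+s, i+k+1+s)`,
the ballot numbers (`s = 0, 1`). The Gram identity `∑ₖ L i k L j k = c_{i+j+s}` is the
reflection principle: after `C(q, r) = C(q, q - r)` each product `L i k L j k` splits into two
terms of the Vandermonde convolution for `C(2m, m) - C(2m, m+1)`, `m = i+j+s`, and as `k` runs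
over `0..i` these terms exhaust that convolution.
-/

open Finset

theorem iteratedDeriv_eq_factorial_mul_of_hasFPowerSeriesAt {𝕜 : Type*}
    [NontriviallyNormedField 𝕜] [CompleteSpace 𝕜] [CharZero 𝕜] {f : 𝕜 → 𝕜} {a : ℕ → 𝕜} {x : 𝕜}
    (hf : HasFPowerSeriesAt f (.ofScalars 𝕜 a) x) (n : ℕ) :
    iteratedDeriv n f x = n ! * a n := by
  have hcoeff := congrArg (· n) <| FormalMultilinearSeries.ofScalars_series_injective 𝕜 𝕜 <|
    hf.analyticAt.hasFPowerSeriesAt.eq_formalMultilinearSeries hf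
  simp only at hcoeff
  rw [← hcoeff, mul_div_cancel₀ _ (Nat.cast_ne_zero.2 n.factorial_ne_zero)]

theorem summable_abs_mul_pow_div_factorial {a : ℕ → ℝ} {C : ℝ} (ha : ∀ n, |a n| ≤ C ^ n)
    (y : ℝ) :
    Summable fun n => |a n| * |y| ^ n / n ! := by
  refine (Real.summable_pow_div_factorial (|C| * |y|)).of_nonneg_of_le (fun n => by positivity)
    fun n => ?_
  rw [mul_pow]
  gcongr
  exact (ha n).trans ((le_abs_self _).trans (abs_pow C n).le)

theorem hasFPowerSeriesOnBall_tsum_mul_pow_div_factorial {a : ℕ → ℝ} {C : ℝ}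
    (ha : ∀ n, |a n| ≤ C ^ n) :
    HasFPowerSeriesOnBall (fun t => ∑' n, a n * t ^ n / n !)
      (.ofScalars ℝ fun n => a n / n !) 0 ⊤ where
  r_le := by
    rw [FormalMultilinearSeries.radius_eq_top_of_summable_norm]
    intro r
    refine (summable_abs_mul_pow_div_factorial ha r).congr fun n => ?_
    simp [div_mul_eq_mul_div]
  r_pos := ENNReal.zero_lt_top
  hasSum {y} _ := by
    simp only [zero_add, FormalMultilinearSeries.ofScalars_apply_eq, smul_eq_mul]
    have hsum : Summable fun n => a n * y ^ n / n ! := by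
      refine .of_norm <| (summable_abs_mul_pow_div_factorial ha y).congr fun n => ?_
      simp
    simpa only [div_mul_eq_mul_div] using hsum.hasSum

theorem catalan_eq_choose_sub_choose (m : ℕ) :
    (catalan m : ℤ) = (2 * m).choose m - (2 * m).choose (m + 1) := by
  have hc : ((m : ℤ) + 1) * catalan m = (2 * m).choose m := by
    exact_mod_cast
      (succ_mul_catalan_eq_centralBinom m).trans (Nat.centralBinom_eq_two_mul_choose m)
  have hsucc : ((2 * m).choose (m + 1) : ℤ) * (m + 1) = (2 * m).choose m * m := by
    have := Nat.choose_succ_right_eq (2 * m) m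
    rw [show 2 * m - m = m by omega] at this
    exact_mod_cast this
  refine mul_left_cancel₀ (by positivity : (m : ℤ) + 1 ≠ 0) ?_
  linear_combination hc + hsucc

theorem Nat.sum_range_choose_mul_choose_of_le {p T : ℕ} (q : ℕ) (hp : p ≤ T) :
    ∑ a ∈ range (p + 1), p.choose a * q.choose (T - a) = (p + q).choose T := by
  rw [Nat.add_choose_eq, Finset.Nat.sum_antidiagonal_eq_sum_range_succ_mk]
  refine Finset.sum_subset (range_subset_range.2 (by omega)) fun a _ ha => ?_
  rw [Nat.choose_eq_zero_of_lt (by simpa using ha), zero_mul]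

def chooseConvDiff (p q m a : ℕ) : ℤ :=
  p.choose a * ((q.choose (m - a) : ℤ) - q.choose (m + 1 - a))

theorem sum_range_chooseConvDiff {p m : ℕ} (q : ℕ) (hp : p ≤ m) :
    ∑ a ∈ range (p + 1), chooseConvDiff p q m a =
      (p + q).choose m - (p + q).choose (m + 1) := by
  simp only [chooseConvDiff, mul_sub, sum_sub_distrib]
  rw [← Nat.sum_range_choose_mul_choose_of_le q hp,
    ← Nat.sum_range_choose_mul_choose_of_le q (hp.trans m.le_succ)]
  push_cast
  rfl

def ballot (s n k : ℕ) : ℤ :=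
  if k ≤ n then (2 * n + s).choose (n - k) - (2 * n + s).choose (n + k + 1 + s) else 0

theorem ballot_self (s n : ℕ) : ballot s n n = 1 := by
  simp [ballot, Nat.choose_eq_zero_of_lt (by omega : 2 * n + s < n + n + 1 + s)]

theorem ballot_mul_ballot {s i j k : ℕ} (hk : k ≤ i) (hij : i ≤ j) :
    ballot s i k * ballot s j k =
      chooseConvDiff (2 * i + s) (2 * j + s) (i + j + s) (i - k) +
        chooseConvDiff (2 * i + s) (2 * j + s) (i + j + s) (i + 1 + s + k) := by
  have hsymm : (2 * j + s).choose (j - k) = (2 * j + s).choose (j + k + s) :=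
    Nat.choose_symm_of_eq_add (by omega)
  simp only [ballot, chooseConvDiff, if_pos hk, if_pos (hk.trans hij),
    show i + j + s - (i - k) = j + k + s by omega,
    show i + j + s + 1 - (i - k) = j + k + 1 + s by omega,
    show i + 1 + s + k = i + k + 1 + s by omega,
    show i + j + s - (i + k + 1 + s) = j - k - 1 by omega,
    show i + j + s + 1 - (i + k + 1 + s) = j - k by omega, hsymm]
  rcases (hk.trans hij).lt_or_eq with hkj | rfl
  · rw [Nat.choose_symm_of_eq_add (by omega : 2 * j + s = (j - k - 1) + (j + k + 1 + s))]
    ring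
  · rw [Nat.choose_eq_zero_of_lt (by omega : 2 * i + s < i + k + 1 + s)]
    ring

theorem sum_ballot_mul_ballot_of_le {s i j : ℕ} (hs : s ≤ 1) (hij : i ≤ j) :
    ∑ k ∈ range (i + 1), ballot s i k * ballot s j k = catalan (i + j + s) := by
  set D := chooseConvDiff (2 * i + s) (2 * j + s) (i + j + s)
  have hgap : ∀ a ∈ range s, D (i + 1 + a) = 0 := by
    intro a ha
    obtain ⟨rfl, rfl⟩ : s = 1 ∧ a = 0 := by have := mem_range.1 ha; omega
    simp only [D, chooseConvDiff, show i + j + 1 - (i + 1 + 0) = j by omega,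
      show i + j + 1 + 1 - (i + 1 + 0) = j + 1 by omega, Nat.choose_symm_half, sub_self, mul_zero]
  have htop : D (2 * i + s + 1) = 0 := by
    simp [D, chooseConvDiff, Nat.choose_succ_self]
  calc ∑ k ∈ range (i + 1), ballot s i k * ballot s j k
      = ∑ k ∈ range (i + 1), D (i - k) + ∑ k ∈ range (i + 1), D (i + 1 + s + k) := by
        rw [← sum_add_distrib]
        refine sum_congr rfl fun k hk => ?_
        exact ballot_mul_ballot (Nat.lt_succ_iff.1 (mem_range.1 hk)) hij
    _ = ∑ a ∈ range (2 * i + s + 1 + 1), D a := by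
        rw [show 2 * i + s + 1 + 1 = i + 1 + (s + (i + 1)) by omega,
          sum_range_add D (i + 1) (s + (i + 1)), sum_range_add (fun a => D (i + 1 + a)) s (i + 1),
          sum_eq_zero hgap, zero_add, ← sum_range_reflect D]
        simp only [add_tsub_cancel_right, add_assoc]
    _ = (2 * (i + j + s)).choose (i + j + s) - (2 * (i + j + s)).choose (i + j + s + 1) := by
        rw [sum_range_succ, htop, add_zero, sum_range_chooseConvDiff _ (by omega),
          show 2 * i + s + (2 * j + s) = 2 * (i + j + s) by omega]
    _ = catalan (i + j + s) := (catalan_eq_choose_sub_choose _).symm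

theorem sum_ballot_mul_ballot {s N : ℕ} (hs : s ≤ 1) (i j : Fin N) :
    ∑ k : Fin N, ballot s i k * ballot s j k = catalan (i + j + s) := by
  wlog hij : i ≤ j generalizing i j
  · simpa only [mul_comm, add_comm (j : ℕ)] using this j i (le_of_not_ge hij)
  rw [Fin.sum_univ_eq_sum_range (fun k => ballot s i k * ballot s j k),
    ← sum_ballot_mul_ballot_of_le hs hij]
  refine (sum_subset (range_subset_range.2 (by omega)) fun k _ hk => ?_).symm
  simp [ballot, show ¬k ≤ i by simpa using hk]

theorem det_catalan_hankel (R : Type*) [CommRing R] {s : ℕ} (hs : s ≤ 1) (N : ℕ) :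
    (Matrix.of fun i j : Fin N => (catalan (i + j + s) : R)).det = 1 := by
  let L : Matrix (Fin N) (Fin N) R := .of fun i k => (ballot s i k : R)
  have hgram : (Matrix.of fun i j : Fin N => (catalan (i + j + s) : R)) = L * L.transpose := by
    ext i j
    simp only [Matrix.of_apply, Matrix.mul_apply, Matrix.transpose_apply, L]
    rw [← Int.cast_natCast, ← sum_ballot_mul_ballot hs i j]
    push_cast
    rfl
  have hL : L.det = 1 := by
    rw [Matrix.det_of_isLowerTriangular L fun i k hik => by
      simp [L, ballot, not_le.2 (OrderDual.toDual_lt_toDual.1 hik)]]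
    simp [L, ballot_self]
  rw [hgram, Matrix.det_mul, Matrix.det_transpose, hL, one_mul]

theorem catalan_le_four_pow (n : ℕ) : catalan n ≤ 4 ^ n :=
  (Nat.le_mul_of_pos_left _ n.succ_pos).trans <|
    (succ_mul_catalan_eq_centralBinom n).le.trans (Nat.centralBinom_le_four_pow n)

theorem iteratedDeriv_catalanEGF_zero (n : ℕ) : iteratedDeriv n catalanEGF 0 = catalan n := by
  have hbound (k : ℕ) : |(catalan k : ℝ)| ≤ 4 ^ k := by
    rw [Nat.abs_cast]
    exact_mod_cast catalan_le_four_pow k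
  rw [iteratedDeriv_eq_factorial_mul_of_hasFPowerSeriesAt (f := catalanEGF)
    (hasFPowerSeriesOnBall_tsum_mul_pow_div_factorial hbound).hasFPowerSeriesAt n,
    mul_div_cancel₀ _ (Nat.cast_ne_zero.2 n.factorial_ne_zero)]

/-- All Hankel–Wronskian determinants of the exponential generating
function of the Catalan numbers equal 1 at the origin: `w_n(0) = 1` for `n ≥ 0`. -/
theorem hankelWronskian_catalan_egf_at_zero (n : ℕ) :
    hankelWronskian catalanEGF (n : ℤ) 0 = 1 := by
  rw [hankelWronskian, if_neg (by omega), if_neg (by omega), Int.toNat_natCast]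
  split_ifs
  · simpa only [iteratedDeriv_catalanEGF_zero, add_zero] using
      det_catalan_hankel ℝ (s := 0) zero_le_one (n / 2 + 1)
  · simpa only [iteratedDeriv_catalanEGF_zero] using
      det_catalan_hankel ℝ (s := 1) le_rfl (n / 2 + 1)
end

section
/- Let f be the exponential generating function of the Catalan numbers. Then t·(f'(t)/f(t)) tends to −1/2 as t → −∞. -/
/-!
The Catalan numbers are the even moments of the semicircle weight `√(4 - x²)` on `[-2, 2]`,
`∫ x ^ (2n) √(4 - x²) dx = 2π cₙ`: integration by parts gives the recurrence
`(n + 2) cₙ₊₁ = 2 (2n + 1) cₙ`. Summing the exponential series under the integral,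
`f t = (2π)⁻¹ ∫ exp (t x²) √(4 - x²) dx` and `f' t = (2π)⁻¹ ∫ x² exp (t x²) √(4 - x²) dx`.
For `t = -r²` the substitution `u = r x` turns `r ∫ h (r x) √(4 - x²) dx` into
`∫ h u √(4 - u² / r²) du`, which tends to `2 ∫ h` as `r → ∞`. Hence
`t f' t / f t → -(∫ u² exp (-u²) du) / (∫ exp (-u²) du) = -1/2`.
-/

open Real Filter MeasureTheory Set intervalIntegral
open scoped Topology

open scoped Nat

theorem add_two_mul_catalan_succ (n : ℕ) :
    (n + 2) * catalan (n + 1) = 2 * (2 * n + 1) * catalan n := by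
  refine Nat.eq_of_mul_eq_mul_left n.succ_pos ?_
  calc (n + 1) * ((n + 2) * catalan (n + 1)) = (n + 1) * (n + 1).centralBinom := by
        rw [← succ_mul_catalan_eq_centralBinom]
    _ = (n + 1) * (2 * (2 * n + 1) * catalan n) := by
        rw [Nat.succ_mul_centralBinom_succ, ← succ_mul_catalan_eq_centralBinom]; ring

-- `2π` times the semicircle density; `Real.sqrt` makes it vanish outside `[-2, 2]`.
noncomputable def semicircle (x : ℝ) : ℝ := √(4 - x ^ 2)

@[fun_prop]
theorem continuous_semicircle : Continuous semicircle := by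
  unfold semicircle; fun_prop

theorem semicircle_nonneg (x : ℝ) : 0 ≤ semicircle x := sqrt_nonneg _

theorem semicircle_le_two (x : ℝ) : semicircle x ≤ 2 :=
  sqrt_le_iff.2 ⟨zero_le_two, by nlinarith [sq_nonneg x]⟩

theorem semicircle_eq_zero_of_four_le_sq {x : ℝ} (hx : 4 ≤ x ^ 2) : semicircle x = 0 :=
  sqrt_eq_zero_of_nonpos (by linarith)

theorem semicircle_zero : semicircle 0 = 2 := by
  simp [semicircle, show (4 : ℝ) = 2 ^ 2 by norm_num]

theorem hasDerivAt_four_sub_sq_mul_semicircle {x : ℝ} (hx : x ^ 2 < 4) :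
    HasDerivAt (fun y => (4 - y ^ 2) * semicircle y) (-3 * x * semicircle x) x := by
  have hpos : 0 < 4 - x ^ 2 := by linarith
  have hinner : HasDerivAt (fun y : ℝ => 4 - y ^ 2) (-(2 * x)) x := by
    simpa using (hasDerivAt_pow 2 x).const_sub 4
  refine (hinner.mul (hinner.sqrt hpos.ne')).congr_deriv ?_
  have hsq := sq_sqrt hpos.le
  have hne := (sqrt_pos.2 hpos).ne'
  unfold semicircle
  field_simp
  linear_combination x * hsq

theorem integral_semicircle : ∫ x in (-2 : ℝ)..2, semicircle x = 2 * π := by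
  have hscale : ∀ u : ℝ, semicircle (2 * u) = 2 * √(1 - u ^ 2) := fun u => by
    rw [semicircle, show 4 - (2 * u) ^ 2 = 2 ^ 2 * (1 - u ^ 2) by ring, sqrt_mul (by norm_num),
      sqrt_sq zero_le_two]
  have h := intervalIntegral.integral_comp_mul_left semicircle (a := -1) (b := 1)
    (two_ne_zero (α := ℝ))
  simp only [hscale, intervalIntegral.integral_const_mul, integral_sqrt_one_sub_sq,
    smul_eq_mul] at h
  norm_num at h
  linarith

theorem integral_pow_mul_semicircle_succ (n : ℕ) :
    (2 * n + 4) * ∫ x in (-2 : ℝ)..2, x ^ (2 * (n + 1)) * semicircle x =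
      4 * (2 * n + 1) * ∫ x in (-2 : ℝ)..2, x ^ (2 * n) * semicircle x := by
  have hint : ∀ k, IntervalIntegrable (fun x : ℝ => x ^ (2 * k) * semicircle x) volume (-2) 2 :=
    fun k => by apply Continuous.intervalIntegrable; fun_prop
  -- integrate `x ^ (2n+1)` against `x * semicircle x = d/dx (-(4 - x²)^(3/2) / 3)`
  have hparts := integral_mul_deriv_eq_deriv_mul_of_hasDerivAt
    (u := fun x : ℝ => x ^ (2 * n + 1)) (u' := fun x => (2 * n + 1) * x ^ (2 * n))
    (v := fun x => -((4 - x ^ 2) * semicircle x) / 3) (v' := fun x => x * semicircle x)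
    (a := -2) (b := 2) (by fun_prop) (by fun_prop)
    (fun x _ => by simpa using hasDerivAt_pow (2 * n + 1) x)
    (fun x hx => by
      have hx2 : x ^ 2 < 4 := by
        simp only [min_def, max_def] at hx; norm_num at hx; nlinarith [hx.1, hx.2]
      refine ((hasDerivAt_four_sub_sq_mul_semicircle hx2).neg.div_const 3).congr_deriv ?_
      ring)
    (by apply Continuous.intervalIntegrable; fun_prop)
    (by apply Continuous.intervalIntegrable; fun_prop)
  have hlhs : ∫ x in (-2 : ℝ)..2, x ^ (2 * n + 1) * (x * semicircle x) =
      ∫ x in (-2 : ℝ)..2, x ^ (2 * (n + 1)) * semicircle x :=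
    integral_congr fun x _ => by ring
  have hrhs : ∫ x in (-2 : ℝ)..2, (2 * n + 1) * x ^ (2 * n) * (-((4 - x ^ 2) * semicircle x) / 3)
      = (2 * n + 1) / 3 * ((∫ x in (-2 : ℝ)..2, x ^ (2 * (n + 1)) * semicircle x) -
          4 * ∫ x in (-2 : ℝ)..2, x ^ (2 * n) * semicircle x) := by
    rw [← intervalIntegral.integral_const_mul, ← integral_sub (hint _) ((hint _).const_mul 4),
      ← intervalIntegral.integral_const_mul]
    exact integral_congr fun x _ => by ring
  rw [hlhs, hrhs] at hparts
  simp only [semicircle_eq_zero_of_four_le_sq (x := 2) (by norm_num),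
    semicircle_eq_zero_of_four_le_sq (x := -2) (by norm_num), mul_zero, neg_zero, zero_div,
    sub_zero, zero_sub] at hparts
  linear_combination 3 * hparts

theorem integral_pow_mul_semicircle (n : ℕ) :
    ∫ x in (-2 : ℝ)..2, x ^ (2 * n) * semicircle x = 2 * π * catalan n := by
  induction n with
  | zero => simp [integral_semicircle]
  | succ n ih =>
    have hrec : ((n : ℝ) + 2) * catalan (n + 1) = 2 * (2 * n + 1) * catalan n := by
      exact_mod_cast add_two_mul_catalan_succ n
    have hM := integral_pow_mul_semicircle_succ n
    rw [ih] at hM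
    refine mul_left_cancel₀ (show (2 * n + 4 : ℝ) ≠ 0 by positivity) ?_
    linear_combination hM - 4 * π * hrec

theorem hasSum_intervalIntegral_pow_div_factorial_mul {f g : ℝ → ℝ} (hf : Continuous f)
    (hg : Continuous g) (a b : ℝ) :
    HasSum (fun n => ∫ x in a..b, f x ^ n / n ! * g x) (∫ x in a..b, exp (f x) * g x) := by
  have hexp : ∀ y : ℝ, HasSum (fun n => y ^ n / n !) (exp y) := fun y => by
    simpa [exp_eq_exp_ℝ] using NormedSpace.expSeries_div_hasSum_exp y
  refine hasSum_integral_of_dominated_convergence (fun n x => |f x| ^ n / n ! * |g x|)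
    (fun n => by apply Continuous.aestronglyMeasurable; fun_prop)
    (fun n => .of_forall fun x _ => by simp)
    (.of_forall fun x _ => ((hexp _).mul_right _).summable) ?_
    (.of_forall fun x _ => (hexp _).mul_right _)
  simp_rw [tsum_mul_right, (hexp _).tsum_eq]
  apply Continuous.intervalIntegrable; fun_prop

theorem catalanEGF_eq_integral (t : ℝ) :
    catalanEGF t = (2 * π)⁻¹ * ∫ x in (-2 : ℝ)..2, exp (t * x ^ 2) * semicircle x := by
  have h := (hasSum_intervalIntegral_pow_div_factorial_mul (f := fun x => t * x ^ 2)
    (by fun_prop) continuous_semicircle (-2) 2).mul_left (2 * π)⁻¹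
  refine (tsum_congr fun n => ?_).trans h.tsum_eq
  have hterm : ∫ x in (-2 : ℝ)..2, (t * x ^ 2) ^ n / n ! * semicircle x =
      t ^ n / n ! * ∫ x in (-2 : ℝ)..2, x ^ (2 * n) * semicircle x := by
    rw [← intervalIntegral.integral_const_mul]
    exact integral_congr fun x _ => by ring
  rw [hterm, integral_pow_mul_semicircle]
  field_simp

theorem hasDerivAt_intervalIntegral_exp_mul {f g : ℝ → ℝ} (hf : Continuous f)
    (hg : Continuous g) (a b t : ℝ) :
    HasDerivAt (fun s => ∫ x in a..b, exp (s * f x) * g x)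
      (∫ x in a..b, f x * exp (t * f x) * g x) t := by
  have hbound : ∀ x, ∀ s ∈ Metric.ball t 1,
      ‖f x * exp (s * f x) * g x‖ ≤ |f x| * exp ((|t| + 1) * |f x|) * |g x| := by
    intro x s hs
    have hs' : |s| ≤ |t| + 1 := by
      have := abs_sub_abs_le_abs_sub s t
      rw [Metric.mem_ball, dist_eq_norm, norm_eq_abs] at hs
      linarith
    rw [norm_mul, norm_mul, norm_eq_abs, norm_eq_abs, norm_eq_abs, abs_of_pos (exp_pos _)]
    have hexp : exp (s * f x) ≤ exp ((|t| + 1) * |f x|) := exp_le_exp.2 <|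
      calc s * f x ≤ |s| * |f x| := by rw [← abs_mul]; exact le_abs_self _
        _ ≤ (|t| + 1) * |f x| := by gcongr
    gcongr
  refine (hasDerivAt_integral_of_dominated_loc_of_deriv_le (Metric.ball_mem_nhds t one_pos)
    (.of_forall fun s => by apply Continuous.aestronglyMeasurable; fun_prop)
    (by apply Continuous.intervalIntegrable; fun_prop)
    (by apply Continuous.aestronglyMeasurable; fun_prop)
    (.of_forall fun x _ => hbound x)
    (by apply Continuous.intervalIntegrable; fun_prop)
    (.of_forall fun x _ s _ => ?_)).2
  exact (((hasDerivAt_id s).mul_const (f x)).exp.mul_const (g x)).congr_deriv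
    (by simp only [id]; ring)

theorem hasDerivAt_catalanEGF (t : ℝ) :
    HasDerivAt catalanEGF
      ((2 * π)⁻¹ * ∫ x in (-2 : ℝ)..2, x ^ 2 * exp (t * x ^ 2) * semicircle x) t := by
  rw [show catalanEGF = _ from funext catalanEGF_eq_integral]
  exact ((hasDerivAt_intervalIntegral_exp_mul (continuous_pow 2) continuous_semicircle
    (-2) 2 t).const_mul _)

theorem tendsto_mul_integral_comp_mul_mul {h w : ℝ → ℝ} (hh : Integrable h) (hw : Continuous w)
    {C : ℝ} (hC : ∀ x, |w x| ≤ C) :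
    Tendsto (fun r => r * ∫ x, h (r * x) * w x) atTop (𝓝 ((∫ u, h u) * w 0)) := by
  have hsub : ∀ r : ℝ, 0 < r → r * ∫ x, h (r * x) * w x = ∫ u, h u * w (r⁻¹ * u) := by
    intro r hr
    have := Measure.integral_comp_mul_left (fun u => h u * w (r⁻¹ * u)) r
    simp only [← mul_assoc, inv_mul_cancel₀ hr.ne', one_mul, smul_eq_mul,
      abs_of_pos (inv_pos.2 hr)] at this
    rw [this, ← mul_assoc, mul_inv_cancel₀ hr.ne', one_mul]
  rw [← MeasureTheory.integral_mul_const]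
  have hw_meas : ∀ r : ℝ, AEStronglyMeasurable (fun u => w (r⁻¹ * u)) :=
    fun r => (hw.comp (continuous_const_mul r⁻¹)).aestronglyMeasurable
  refine (tendsto_integral_filter_of_dominated_convergence (fun u => |h u| * C)
    (.of_forall fun r => hh.aestronglyMeasurable.mul (hw_meas r))
    (.of_forall fun r => .of_forall fun u => ?_) (hh.abs.mul_const C)
    (.of_forall fun u => ?_)).congr' ?_
  · rw [Pi.mul_apply, norm_mul, norm_eq_abs, norm_eq_abs]
    exact mul_le_mul_of_nonneg_left (hC _) (abs_nonneg _)
  · have : Tendsto (fun r : ℝ => r⁻¹ * u) atTop (𝓝 0) := by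
      simpa using tendsto_inv_atTop_zero.mul_const u
    exact (hw.tendsto 0 |>.comp this).const_mul (h u)
  · filter_upwards [eventually_gt_atTop 0] with r hr using (hsub r hr).symm

theorem intervalIntegral_mul_semicircle_eq_integral (G : ℝ → ℝ) :
    ∫ x in (-2 : ℝ)..2, G x * semicircle x = ∫ x, G x * semicircle x := by
  rw [intervalIntegral.integral_of_le (by norm_num)]
  refine setIntegral_eq_integral_of_forall_compl_eq_zero fun x hx => ?_
  have hx2 : 4 ≤ x ^ 2 := by
    simp only [mem_Ioc, not_and_or, not_lt, not_le] at hx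
    rcases hx with hx | hx <;> nlinarith
  rw [semicircle_eq_zero_of_four_le_sq hx2, mul_zero]

theorem tendsto_mul_intervalIntegral_comp_mul_mul_semicircle {h : ℝ → ℝ} (hh : Integrable h) :
    Tendsto (fun r => r * ∫ x in (-2 : ℝ)..2, h (r * x) * semicircle x) atTop
      (𝓝 (2 * ∫ u, h u)) := by
  simp only [intervalIntegral_mul_semicircle_eq_integral]
  have := tendsto_mul_integral_comp_mul_mul hh continuous_semicircle
    (fun x => (abs_of_nonneg (semicircle_nonneg x)).trans_le (semicircle_le_two x))
  rwa [semicircle_zero, mul_comm] at this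

theorem integral_exp_neg_sq : ∫ x : ℝ, exp (-x ^ 2) = √π := by
  simpa using integral_gaussian 1

theorem integrable_sq_mul_exp_neg_sq : Integrable fun x : ℝ => x ^ 2 * exp (-x ^ 2) := by
  simpa [rpow_two] using integrable_rpow_mul_exp_neg_mul_sq one_pos (s := 2) (by norm_num)

theorem integral_sq_mul_exp_neg_sq : ∫ x : ℝ, x ^ 2 * exp (-x ^ 2) = √π / 2 := by
  have h := integral_rpow_mul_exp_neg_rpow (p := 2) (q := 2) two_pos (by norm_num)
  simp only [rpow_two] at h
  have hΓ : Gamma ((2 + 1) / 2) = √π / 2 := by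
    rw [show ((2 : ℝ) + 1) / 2 = 1 / 2 + 1 by norm_num, Gamma_add_one (by norm_num),
      Gamma_one_half_eq]
    ring
  have hsym := integral_comp_abs (f := fun x => x ^ 2 * exp (-x ^ 2))
  simp only [sq_abs] at hsym
  rw [hsym, h, hΓ]
  ring

theorem neg_sq_mul_deriv_catalanEGF_div {r : ℝ} (hr : 0 < r) :
    -r ^ 2 * (deriv catalanEGF (-r ^ 2) / catalanEGF (-r ^ 2)) =
      -((r * ∫ x in (-2 : ℝ)..2, (r * x) ^ 2 * exp (-(r * x) ^ 2) * semicircle x) /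
        (r * ∫ x in (-2 : ℝ)..2, exp (-(r * x) ^ 2) * semicircle x)) := by
  have hexp : ∀ x : ℝ, exp (-r ^ 2 * x ^ 2) = exp (-(r * x) ^ 2) := fun x => by ring_nf
  have h₀ : ∫ x in (-2 : ℝ)..2, exp (-r ^ 2 * x ^ 2) * semicircle x =
      ∫ x in (-2 : ℝ)..2, exp (-(r * x) ^ 2) * semicircle x :=
    integral_congr fun x _ => by rw [hexp]
  have h₂ : ∫ x in (-2 : ℝ)..2, (r * x) ^ 2 * exp (-(r * x) ^ 2) * semicircle x =
      r ^ 2 * ∫ x in (-2 : ℝ)..2, x ^ 2 * exp (-r ^ 2 * x ^ 2) * semicircle x := by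
    rw [← intervalIntegral.integral_const_mul]
    exact integral_congr fun x _ => by simp only [hexp]; ring
  have hπ : (2 * π)⁻¹ ≠ 0 := by positivity
  rw [(hasDerivAt_catalanEGF _).deriv, catalanEGF_eq_integral, mul_div_mul_left _ _ hπ,
    mul_div_mul_left _ _ hr.ne', h₀, h₂]
  ring

/-- For the exponential generating function f of the Catalan numbers,
t·(f'(t)/f(t)) tends to −1/2 as t → −∞. -/
theorem catalan_egf_logderiv_tendsto_atBot :
    Filter.Tendsto (fun t : ℝ => t * (deriv catalanEGF t / catalanEGF t))
      Filter.atBot (nhds (-1 / 2)) := by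
  have hlim₀ := tendsto_mul_intervalIntegral_comp_mul_mul_semicircle
    (by simpa using integrable_exp_neg_mul_sq one_pos : Integrable fun x : ℝ => exp (-x ^ 2))
  have hlim₂ := tendsto_mul_intervalIntegral_comp_mul_mul_semicircle integrable_sq_mul_exp_neg_sq
  rw [integral_exp_neg_sq] at hlim₀
  rw [integral_sq_mul_exp_neg_sq] at hlim₂
  have hratio := (hlim₂.div hlim₀ (by positivity)).neg
  rw [show -(2 * (√π / 2) / (2 * √π)) = -1 / 2 by field_simp] at hratio
  have hsqrt : Tendsto (fun t : ℝ => √(-t)) atBot atTop :=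
    tendsto_sqrt_atTop.comp tendsto_neg_atBot_atTop
  refine (hratio.comp hsqrt).congr' ?_
  filter_upwards [eventually_lt_atBot 0] with t ht
  have := neg_sq_mul_deriv_catalanEGF_div (sqrt_pos.2 (neg_pos.2 ht))
  rw [sq_sqrt (neg_nonneg.2 ht.le), neg_neg] at this
  exact this.symm
end
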